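/- The 4×4 matrix C with rows (-11/6, -1/3, 1/6, -1/3), (3, -1/2, -1, 3/2), (-3/2, 1, 1/2, -3), (1/3, -1/6, 1/3, 11/6) has rank 3; in particular C is singular (its determinant is zero). -/

import Mathlib

/-!
`C` annihilates the third-difference vector `(1, -3, 3, -1)`, so it is singular and has rank
at most `3`; its leading `3 × 3` minor is nonzero, so its rank is at least `3`.
-/

open Matrix

namespace Matrix

variable {m n k K : Type*} [Fintype n] [Field K]

theorem rank_lt_card_width_of_mulVec_eq_zero (A : Matrix m n K) {v : n → K} (hv : v ≠ 0)
    (hAv : A *ᵥ v = 0) : A.rank < Fintype.card n := by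
  have hker : LinearMap.ker A.mulVecLin ≠ ⊥ :=
    fun h => hv ((Submodule.eq_bot_iff _).mp h v hAv)
  have hpos : 0 < Module.finrank K (LinearMap.ker A.mulVecLin) :=
    Nat.pos_of_ne_zero fun h => hker (Submodule.finrank_eq_zero.mp h)
  have := LinearMap.finrank_range_add_finrank_ker A.mulVecLin
  rw [Module.finrank_fintype_fun_eq_card] at this
  rw [rank]
  omega

theorem card_le_rank_of_det_submatrix_ne_zero [Fintype k] [DecidableEq k] (A : Matrix m n K)
    (r : k → m) (c : k → n) (h : (A.submatrix r c).det ≠ 0) : Fintype.card k ≤ A.rank :=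
  (rank_of_det_ne_zero h).symm.le.trans (rank_submatrix_le A r c)

end Matrix

theorem boundary_matrix_rank_three :
    (!![-11/6, -1/3, 1/6, -1/3;
        3, -1/2, -1, 3/2;
        -3/2, 1, 1/2, -3;
        1/3, -1/6, 1/3, 11/6] : Matrix (Fin 4) (Fin 4) ℝ).rank = 3 ∧
    (!![-11/6, -1/3, 1/6, -1/3;
        3, -1/2, -1, 3/2;
        -3/2, 1, 1/2, -3;
        1/3, -1/6, 1/3, 11/6] : Matrix (Fin 4) (Fin 4) ℝ).det = 0 := by
  set C : Matrix (Fin 4) (Fin 4) ℝ :=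
    !![-11/6, -1/3, 1/6, -1/3;
        3, -1/2, -1, 3/2;
        -3/2, 1, 1/2, -3;
        1/3, -1/6, 1/3, 11/6]
  have hv : (![1, -3, 3, -1] : Fin 4 → ℝ) ≠ 0 := fun h => by
    simpa using congrFun h 0
  have hker : C *ᵥ ![1, -3, 3, -1] = 0 := by
    ext i; fin_cases i <;> simp [C, mulVec, dotProduct, Fin.sum_univ_four] <;> norm_num
  have hminor : (C.submatrix Fin.castSucc Fin.castSucc).det ≠ 0 := by
    simp [C, det_fin_three]; norm_num
  have hle := C.rank_lt_card_width_of_mulVec_eq_zero hv hker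
  have hge := C.card_le_rank_of_det_submatrix_ne_zero _ _ hminor
  simp only [Fintype.card_fin] at hle hge
  exact ⟨by omega, exists_mulVec_eq_zero_iff.mp ⟨_, hv, hker⟩⟩
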